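/- arXiv:2601.21635 — 2 statements merged into one kernel-verified Lean document; each statement's English description precedes it below -/
import Mathlib

section
/- Let H and M be real Hilbert spaces, 𝔞 : H × H → R and 𝔟 : H × M → R bounded bilinear forms, and let H_h ⊆ H, M_h ⊆ M be finite-dimensional subspaces. Suppose (i) there is α > 0 with sup_{y ∈ N_h, y ≠ 0} 𝔞(x, y)/‖y‖ ≥ α‖x‖ for all x in the discrete kernel N_h = {x ∈ H_h : 𝔟(x, l) = 0 for all l ∈ M_h}, and (ii) there is β > 0 with sup_{x ∈ H_h, x ≠ 0} 𝔟(x, l)/‖x‖ ≥ β‖l‖ for all l ∈ M_h. Then for any bounded linear functionals F on H and G on M, the discrete saddle-point problem: find (x_h, m_h) ∈ H_h × M_h with 𝔞(x_h, y) + 𝔟(y, m_h) = F(y) for all y ∈ H_h and 𝔟(x_h, l) = G(l) for all l ∈ M_h, has a unique solution. -/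
/-!
Restricted to `H_h × M_h`, the saddle-point problem is a square linear system between
finite-dimensional spaces, `(x, m) ↦ (𝔞 x ⬝ + 𝔟 ⬝ m, 𝔟 x ⬝)` into the dual spaces, so it suffices
to show that the homogeneous problem has only the trivial solution. If `(x, m)` solves it,
then `x` lies in the discrete kernel and `𝔞 x` vanishes there, so (i) forces `x = 0`; then
`𝔟 ⬝ m` vanishes on `H_h`, and (ii) forces `m = 0`.
-/

open Module

section SMulAdd

variable {R E F : Type*} [CommRing R] [AddCommGroup E] [Module R E] [AddCommGroup F] [Module R F]

theorem map_zero_of_smul_add {g : E → R} (hg : ∀ (c : R) x x', g (c • x + x') = c * g x + g x') :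
    g 0 = 0 := by
  simpa using hg 1 0 0

theorem map_add_of_smul_add {g : E → R} (hg : ∀ (c : R) x x', g (c • x + x') = c * g x + g x')
    (x x' : E) : g (x + x') = g x + g x' := by
  simpa using hg 1 x x'

theorem map_smul_of_smul_add {g : E → R} (hg : ∀ (c : R) x x', g (c • x + x') = c * g x + g x')
    (c : R) (x : E) : g (c • x) = c * g x := by
  simpa [map_zero_of_smul_add hg] using hg c x 0

def LinearMap.mk₂OfSMulAdd (f : E → F → R)
    (h₁ : ∀ (c : R) x x' y, f (c • x + x') y = c * f x y + f x' y)
    (h₂ : ∀ (c : R) x y y', f x (c • y + y') = c * f x y + f x y') : E →ₗ[R] F →ₗ[R] R :=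
  LinearMap.mk₂ R f (fun x x' y => map_add_of_smul_add (g := (f · y)) (h₁ · · · y) x x')
    (fun c x y => map_smul_of_smul_add (g := (f · y)) (h₁ · · · y) c x)
    (fun x y y' => map_add_of_smul_add (g := f x) (h₂ · x · ·) y y')
    (fun c x y => map_smul_of_smul_add (g := f x) (h₂ · x · ·) c y)

end SMulAdd

section SaddlePoint

variable {K V W : Type*} [Field K] [AddCommGroup V] [Module K V] [AddCommGroup W] [Module K W]

def saddlePointOperator (A : V →ₗ[K] V →ₗ[K] K) (B : V →ₗ[K] W →ₗ[K] K) :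
    V × W →ₗ[K] Dual K V × Dual K W :=
  (A ∘ₗ LinearMap.fst K V W + B.flip ∘ₗ LinearMap.snd K V W).prod (B ∘ₗ LinearMap.fst K V W)

theorem saddlePointOperator_eq_iff (A : V →ₗ[K] V →ₗ[K] K) (B : V →ₗ[K] W →ₗ[K] K)
    (p : V × W) (f : Dual K V) (g : Dual K W) :
    saddlePointOperator A B p = (f, g) ↔ (∀ y, A p.1 y + B y p.2 = f y) ∧ ∀ l, B p.1 l = g l := by
  simp [saddlePointOperator, Prod.ext_iff, LinearMap.ext_iff]

theorem saddlePointOperator_injective (A : V →ₗ[K] V →ₗ[K] K) (B : V →ₗ[K] W →ₗ[K] K)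
    (hA : ∀ x, (∀ l, B x l = 0) → (∀ y, (∀ l, B y l = 0) → A x y = 0) → x = 0)
    (hB : ∀ m, (∀ y, B y m = 0) → m = 0) :
    Function.Injective (saddlePointOperator A B) := by
  rw [← LinearMap.ker_eq_bot, LinearMap.ker_eq_bot']
  rintro ⟨x, m⟩ hp
  obtain ⟨hAB, hBx⟩ := (saddlePointOperator_eq_iff A B (x, m) 0 0).1 hp
  have hx : x = 0 := hA x hBx fun y hy => by simpa [hy] using hAB y
  subst hx
  simpa using hB m fun y => by simpa using hAB y

/-- `hA` and `hB` are the kernel and inf-sup conditions (i) and (ii) in the algebraic form to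
which they reduce in finite dimension. -/
theorem saddlePoint_existsUnique [FiniteDimensional K V] [FiniteDimensional K W]
    (A : V →ₗ[K] V →ₗ[K] K) (B : V →ₗ[K] W →ₗ[K] K)
    (hA : ∀ x, (∀ l, B x l = 0) → (∀ y, (∀ l, B y l = 0) → A x y = 0) → x = 0)
    (hB : ∀ m, (∀ y, B y m = 0) → m = 0) (f : Dual K V) (g : Dual K W) :
    ∃! p : V × W, (∀ y, A p.1 y + B y p.2 = f y) ∧ ∀ l, B p.1 l = g l := by
  have hinj := saddlePointOperator_injective A B hA hB
  have hdim : finrank K (V × W) = finrank K (Dual K V × Dual K W) := by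
    simp [Module.finrank_prod, Subspace.dual_finrank_eq]
  have hbij : Function.Bijective (saddlePointOperator A B) :=
    ⟨hinj, (LinearMap.injective_iff_surjective_of_finrank_eq_finrank hdim).1 hinj⟩
  simpa only [saddlePointOperator_eq_iff] using hbij.existsUnique (f, g)

end SaddlePoint

theorem eq_zero_of_mul_norm_le_sSup {E F : Type*} [NormedAddCommGroup E] [NormedAddCommGroup F]
    {x : E} {S : Set F} {f : F → ℝ} {α : ℝ} (hα : 0 < α)
    (hle : α * ‖x‖ ≤ sSup {t : ℝ | ∃ y ∈ S, y ≠ 0 ∧ t = f y / ‖y‖}) (hf : ∀ y ∈ S, f y = 0) :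
    x = 0 := by
  have hsup : sSup {t : ℝ | ∃ y ∈ S, y ≠ 0 ∧ t = f y / ‖y‖} ≤ 0 :=
    Real.sSup_le (by rintro t ⟨y, hy, -, rfl⟩; simp [hf y hy]) le_rfl
  exact norm_le_zero_iff.1 <| nonpos_of_mul_nonpos_right (hle.trans hsup) hα

theorem existsUnique_prod_mem_of_subtype {α β S T : Type*} [SetLike S α] [SetLike T β]
    {s : S} {t : T} {P : α × β → Prop} (h : ∃! p : s × t, P (p.1, p.2)) :
    ∃! p : α × β, p.1 ∈ s ∧ p.2 ∈ t ∧ P p := by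
  obtain ⟨⟨x, m⟩, hp, huniq⟩ := h
  refine ⟨(x, m), ⟨x.2, m.2, hp⟩, ?_⟩
  rintro ⟨x', m'⟩ ⟨hx', hm', hp'⟩
  simpa using congrArg (fun q : s × t => ((q.1 : α), (q.2 : β))) (huniq (⟨x', hx'⟩, ⟨m', hm'⟩) hp')

theorem stmt_4_general
    {H M : Type*} [NormedAddCommGroup H] [InnerProductSpace ℝ H]
    [NormedAddCommGroup M] [InnerProductSpace ℝ M]
    (a : H → H → ℝ) (b : H → M → ℝ)
    (ha1 : ∀ (c : ℝ) (x x' y), a (c • x + x') y = c * a x y + a x' y)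
    (ha2 : ∀ (c : ℝ) (x y y'), a x (c • y + y') = c * a x y + a x y')
    (hb1 : ∀ (c : ℝ) (x x' l), b (c • x + x') l = c * b x l + b x' l)
    (hb2 : ∀ (c : ℝ) (x l l'), b x (c • l + l') = c * b x l + b x l')
    (Hh : Submodule ℝ H) (Mh : Submodule ℝ M)
    [FiniteDimensional ℝ Hh] [FiniteDimensional ℝ Mh]
    (N : Set H) (hN : N = {x | x ∈ Hh ∧ ∀ l ∈ Mh, b x l = 0})
    (α : ℝ) (hα : 0 < α)
    (hcoer : ∀ x ∈ N, α * ‖x‖ ≤ sSup {t : ℝ | ∃ y ∈ N, y ≠ 0 ∧ t = a x y / ‖y‖})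
    (β : ℝ) (hβ : 0 < β)
    (hinfsup : ∀ l ∈ Mh, β * ‖l‖ ≤ sSup {t : ℝ | ∃ x ∈ Hh, x ≠ 0 ∧ t = b x l / ‖x‖})
    (F : H →L[ℝ] ℝ) (G : M →L[ℝ] ℝ) :
    ∃! p : H × M, p.1 ∈ Hh ∧ p.2 ∈ Mh ∧
      (∀ y ∈ Hh, a p.1 y + b y p.2 = F y) ∧
      (∀ l ∈ Mh, b p.1 l = G l) := by
  subst hN
  let A := (LinearMap.mk₂OfSMulAdd a ha1 ha2).domRestrict₁₂ Hh Hh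
  let B := (LinearMap.mk₂OfSMulAdd b hb1 hb2).domRestrict₁₂ Hh Mh
  have hA : ∀ x, (∀ l, B x l = 0) → (∀ y, (∀ l, B y l = 0) → A x y = 0) → x = 0 := by
    intro x hBx hAx
    refine Submodule.coe_eq_zero.1 <| eq_zero_of_mul_norm_le_sSup hα
      (hcoer x ⟨x.2, fun l hl => hBx ⟨l, hl⟩⟩) ?_
    rintro y ⟨hy, hBy⟩
    exact hAx ⟨y, hy⟩ fun l => hBy l l.2
  have hB : ∀ m, (∀ y, B y m = 0) → m = 0 := fun m hBm =>
    Submodule.coe_eq_zero.1 <| eq_zero_of_mul_norm_le_sSup hβ (hinfsup m m.2)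
      fun y hy => hBm ⟨y, hy⟩
  have h : ∃! p : Hh × Mh, (∀ y : Hh, a p.1 y + b y p.2 = F y) ∧ ∀ l : Mh, b p.1 l = G l :=
    saddlePoint_existsUnique A B hA hB ((F : H →ₗ[ℝ] ℝ).domRestrict Hh)
      ((G : M →ₗ[ℝ] ℝ).domRestrict Mh)
  exact existsUnique_prod_mem_of_subtype (by simpa only [Subtype.forall] using h)

theorem stmt_4
    {H M : Type*} [NormedAddCommGroup H] [InnerProductSpace ℝ H] [CompleteSpace H]
    [NormedAddCommGroup M] [InnerProductSpace ℝ M] [CompleteSpace M]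
    (a : H → H → ℝ) (b : H → M → ℝ)
    (ha1 : ∀ (c : ℝ) (x x' y), a (c • x + x') y = c * a x y + a x' y)
    (ha2 : ∀ (c : ℝ) (x y y'), a x (c • y + y') = c * a x y + a x y')
    (hb1 : ∀ (c : ℝ) (x x' l), b (c • x + x') l = c * b x l + b x' l)
    (hb2 : ∀ (c : ℝ) (x l l'), b x (c • l + l') = c * b x l + b x l')
    (Ca Cb : ℝ)
    (haC : ∀ x y, |a x y| ≤ Ca * ‖x‖ * ‖y‖)
    (hbC : ∀ x l, |b x l| ≤ Cb * ‖x‖ * ‖l‖)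
    (Hh : Submodule ℝ H) (Mh : Submodule ℝ M)
    [FiniteDimensional ℝ Hh] [FiniteDimensional ℝ Mh]
    (N : Set H) (hN : N = {x | x ∈ Hh ∧ ∀ l ∈ Mh, b x l = 0})
    (α : ℝ) (hα : 0 < α)
    (hcoer : ∀ x ∈ N, α * ‖x‖ ≤ sSup {t : ℝ | ∃ y ∈ N, y ≠ 0 ∧ t = a x y / ‖y‖})
    (β : ℝ) (hβ : 0 < β)
    (hinfsup : ∀ l ∈ Mh, β * ‖l‖ ≤ sSup {t : ℝ | ∃ x ∈ Hh, x ≠ 0 ∧ t = b x l / ‖x‖})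
    (F : H →L[ℝ] ℝ) (G : M →L[ℝ] ℝ) :
    ∃! p : H × M, p.1 ∈ Hh ∧ p.2 ∈ Mh ∧
      (∀ y ∈ Hh, a p.1 y + b y p.2 = F y) ∧
      (∀ l ∈ Mh, b p.1 l = G l) :=
  stmt_4_general a b ha1 ha2 hb1 hb2 Hh Mh N hN α hα hcoer β hβ hinfsup F G
end

section
/- Define v₀(x̂₁, x̂₂) = (φ₁−φ₂)(φ₂−φ₃)(φ₃−φ₁)[(φ₁φ₂)^{(r−2)/2} + (φ₂φ₃)^{(r−2)/2} + (φ₃φ₁)^{(r−2)/2}] on the reference triangle, with barycentric coordinates φ₁ = 1−x̂₁−x̂₂, φ₂ = x̂₁, φ₃ = x̂₂ and r ≥ 2 even. Then v₀ is a polynomial of total degree r+1 and v₀ does not belong to P_r (the space of polynomials of total degree ≤ r). -/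
open MvPolynomial

lemma aux_natDegree_aeval_le (f : Fin 2 → Polynomial ℝ) (hf : ∀ i, (f i).natDegree ≤ 1)
    (p : MvPolynomial (Fin 2) ℝ) :
    (MvPolynomial.aeval f p).natDegree ≤ p.totalDegree := by
  rw [MvPolynomial.aeval_def, MvPolynomial.eval₂_eq]
  apply Polynomial.natDegree_sum_le_of_forall_le
  intro d hd
  calc (algebraMap ℝ (Polynomial ℝ) (MvPolynomial.coeff d p) *
          ∏ i ∈ d.support, f i ^ d i).natDegree
      ≤ (∏ i ∈ d.support, f i ^ d i).natDegree := by
        rw [Polynomial.algebraMap_eq]; exact Polynomial.natDegree_C_mul_le _ _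
    _ ≤ ∑ i ∈ d.support, (f i ^ d i).natDegree := Polynomial.natDegree_prod_le _ _
    _ ≤ ∑ i ∈ d.support, d i := by
        refine Finset.sum_le_sum fun i _ => ?_
        calc (f i ^ d i).natDegree ≤ d i * (f i).natDegree := Polynomial.natDegree_pow_le
          _ ≤ d i * 1 := Nat.mul_le_mul_left _ (hf i)
          _ = d i := Nat.mul_one _
    _ = d.sum fun _ e => e := rfl
    _ ≤ p.totalDegree := MvPolynomial.le_totalDegree hd

theorem stmt_19 (r : ℕ) (hr : 2 ≤ r) (hre : Even r)
    (φ₁ φ₂ φ₃ v₀ : MvPolynomial (Fin 2) ℝ)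
    (h1 : φ₁ = 1 - X 0 - X 1) (h2 : φ₂ = X 0) (h3 : φ₃ = X 1)
    (hv : v₀ = (φ₁ - φ₂) * (φ₂ - φ₃) * (φ₃ - φ₁) *
      ((φ₁ * φ₂) ^ ((r - 2) / 2) + (φ₂ * φ₃) ^ ((r - 2) / 2) + (φ₃ * φ₁) ^ ((r - 2) / 2))) :
    v₀.totalDegree = r + 1 ∧ ¬ v₀.totalDegree ≤ r := by
  obtain ⟨m, hm⟩ := hre
  set k := (r - 2) / 2 with hk
  have hrk : r = 2 * k + 2 := by omega
  -- upper bound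
  have hφ1 : φ₁.totalDegree ≤ 1 := by
    subst h1
    refine (totalDegree_sub _ _).trans (max_le ((totalDegree_sub _ _).trans
      (max_le ?_ ?_)) ?_) <;> simp [totalDegree_X, totalDegree_one]
  have hφ2 : φ₂.totalDegree ≤ 1 := by subst h2; simp [totalDegree_X]
  have hφ3 : φ₃.totalDegree ≤ 1 := by subst h3; simp [totalDegree_X]
  have hdiff : ∀ p q : MvPolynomial (Fin 2) ℝ, p.totalDegree ≤ 1 → q.totalDegree ≤ 1 →
      (p - q).totalDegree ≤ 1 := fun p q hp hq =>
    (totalDegree_sub _ _).trans (max_le hp hq)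
  have hmul2 : ∀ p q : MvPolynomial (Fin 2) ℝ, p.totalDegree ≤ 1 → q.totalDegree ≤ 1 →
      (p * q).totalDegree ≤ 2 := fun p q hp hq =>
    (totalDegree_mul _ _).trans (add_le_add hp hq)
  have hpow : ∀ p q : MvPolynomial (Fin 2) ℝ, p.totalDegree ≤ 1 → q.totalDegree ≤ 1 →
      ((p * q) ^ k).totalDegree ≤ 2 * k := fun p q hp hq =>
    (totalDegree_pow _ _).trans (by
      calc k * (p * q).totalDegree ≤ k * 2 := Nat.mul_le_mul_left _ (hmul2 p q hp hq)
        _ = 2 * k := Nat.mul_comm _ _)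
  have hub : v₀.totalDegree ≤ r + 1 := by
    rw [hv, hrk]
    calc ((φ₁ - φ₂) * (φ₂ - φ₃) * (φ₃ - φ₁) *
        ((φ₁ * φ₂) ^ k + (φ₂ * φ₃) ^ k + (φ₃ * φ₁) ^ k)).totalDegree
        ≤ ((φ₁ - φ₂) * (φ₂ - φ₃) * (φ₃ - φ₁)).totalDegree +
          ((φ₁ * φ₂) ^ k + (φ₂ * φ₃) ^ k + (φ₃ * φ₁) ^ k).totalDegree := totalDegree_mul _ _
      _ ≤ 3 + 2 * k := by
          gcongr ?_ + ?_
          · calc ((φ₁ - φ₂) * (φ₂ - φ₃) * (φ₃ - φ₁)).totalDegree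
                ≤ ((φ₁ - φ₂) * (φ₂ - φ₃)).totalDegree + (φ₃ - φ₁).totalDegree :=
                  totalDegree_mul _ _
              _ ≤ ((φ₁ - φ₂).totalDegree + (φ₂ - φ₃).totalDegree) + 1 :=
                  add_le_add (totalDegree_mul _ _) (hdiff _ _ hφ3 hφ1)
              _ ≤ (1 + 1) + 1 :=
                  add_le_add (add_le_add (hdiff _ _ hφ1 hφ2) (hdiff _ _ hφ2 hφ3)) le_rfl
          · refine (totalDegree_add _ _).trans (max_le ((totalDegree_add _ _).trans
              (max_le ?_ ?_)) ?_)
            · exact hpow _ _ hφ1 hφ2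
            · exact hpow _ _ hφ2 hφ3
            · exact hpow _ _ hφ3 hφ1
      _ = 2 * k + 2 + 1 := by omega
  -- lower bound via substitution X0 ↦ X, X1 ↦ 0
  set f : Fin 2 → Polynomial ℝ := ![Polynomial.X, 0] with hf
  have hf1 : ∀ i, (f i).natDegree ≤ 1 := by
    intro i
    fin_cases i <;> simp [hf, Polynomial.natDegree_X]
  have hq : MvPolynomial.aeval f v₀ =
      (1 - Polynomial.X - Polynomial.X) * Polynomial.X * (0 - (1 - Polynomial.X)) *
        (((1 - Polynomial.X) * Polynomial.X) ^ k + (0:Polynomial ℝ) ^ k + (0:Polynomial ℝ) ^ k) := by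
    rw [hv, h1, h2, h3]
    simp only [map_mul, map_add, map_sub, map_pow, map_one, MvPolynomial.aeval_X, hf]
    simp [Matrix.cons_val_zero, Matrix.cons_val_one]
  have hXne : (Polynomial.X : Polynomial ℝ) ≠ 0 := Polynomial.X_ne_zero
  have h1X : ((1 : Polynomial ℝ) - Polynomial.X).natDegree = 1 := by compute_degree!
  have h1Xne : ((1 : Polynomial ℝ) - Polynomial.X) ≠ 0 := by
    intro h
    have := congrArg (fun p => Polynomial.coeff p 0) h
    simp at this
  have h12X : ((1 : Polynomial ℝ) - Polynomial.X - Polynomial.X).natDegree = 1 := by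
    compute_degree!
  have h12Xne : ((1 : Polynomial ℝ) - Polynomial.X - Polynomial.X) ≠ 0 := by
    intro h
    have := congrArg (fun p => Polynomial.coeff p 0) h
    simp at this
  have hP2 : (((1 : Polynomial ℝ) - Polynomial.X) * Polynomial.X).natDegree = 2 := by
    rw [Polynomial.natDegree_mul h1Xne hXne, h1X, Polynomial.natDegree_X]
  have hP2ne : (((1 : Polynomial ℝ) - Polynomial.X) * Polynomial.X) ≠ 0 :=
    mul_ne_zero h1Xne hXne
  have hSne : (((1 - Polynomial.X) * Polynomial.X) ^ k + (0:Polynomial ℝ) ^ k +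
      (0:Polynomial ℝ) ^ k).natDegree = 2 * k := by
    rcases Nat.eq_zero_or_pos k with hk0 | hk0
    · rw [hk0]; norm_num
    · rw [zero_pow (by omega), add_zero, add_zero, Polynomial.natDegree_pow, hP2]
      ring
  have hSne0 : (((1 - Polynomial.X) * Polynomial.X) ^ k + (0:Polynomial ℝ) ^ k +
      (0:Polynomial ℝ) ^ k) ≠ 0 := by
    rcases Nat.eq_zero_or_pos k with hk0 | hk0
    · rw [hk0]; norm_num
    · rw [zero_pow (by omega), add_zero, add_zero]
      exact pow_ne_zero _ hP2ne
  have hqdeg : (MvPolynomial.aeval f v₀).natDegree = 2 * k + 3 := by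
    rw [hq]
    have hA : ((1 - Polynomial.X - Polynomial.X) * Polynomial.X : Polynomial ℝ) ≠ 0 :=
      mul_ne_zero h12Xne hXne
    have hB : ((0 : Polynomial ℝ) - (1 - Polynomial.X)) ≠ 0 := by
      rw [zero_sub, neg_ne_zero]; exact h1Xne
    have hAB : ((1 - Polynomial.X - Polynomial.X) * Polynomial.X *
        (0 - (1 - Polynomial.X)) : Polynomial ℝ) ≠ 0 := mul_ne_zero hA hB
    rw [Polynomial.natDegree_mul hAB hSne0, Polynomial.natDegree_mul hA hB,
      Polynomial.natDegree_mul h12Xne hXne, h12X, Polynomial.natDegree_X, hSne]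
    have : ((0 : Polynomial ℝ) - (1 - Polynomial.X)).natDegree = 1 := by
      rw [zero_sub, Polynomial.natDegree_neg, h1X]
    rw [this]
    ring
  have hlb : r + 1 ≤ v₀.totalDegree := by
    have := aux_natDegree_aeval_le f hf1 v₀
    omega
  exact ⟨le_antisymm hub hlb, by omega⟩
end
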